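/- If A, B : [t₀,∞) → M_m(ℝ) are continuous, then the system ẍ + A(t)ẋ + B(t)x = 0 is L₀-equivalent to some system ξ̈ + V(t)ξ̇ + W(t)ξ = 0 with V, W continuous on [t₀,∞) and W(t) = W(t)ᵀ for all t ≥ t₀. -/

import Mathlib

open Matrix Set intervalIntegral

attribute [local instance] Matrix.frobeniusNormedAddCommGroup Matrix.frobeniusNormedSpace

/-- An `L_k`-matrix on `[t₀,∞)`: a `C²` matrix function with `|det L(t)| ≥ η > 0` and
`sup_{t ≥ t₀} ‖(dⁱ/dtⁱ)L(t)‖ < ∞` for every `0 ≤ i ≤ k`. -/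
def IsLkMatrix (t₀ : ℝ) (k : ℕ) {m : ℕ} (L : ℝ → Matrix (Fin m) (Fin m) ℝ) : Prop :=
  ContDiffOn ℝ 2 L (Ici t₀) ∧
  (∃ η > (0:ℝ), ∀ t ∈ Ici t₀, η ≤ |(L t).det|) ∧
  (∀ i ≤ k, ∃ M : ℝ, ∀ t ∈ Ici t₀, ‖iteratedDerivWithin i L (Ici t₀) t‖ ≤ M)

/-- The system `ẍ + A(t)ẋ + B(t)x = 0` is `L_k`-equivalent to `ξ̈ + V(t)ξ̇ + W(t)ξ = 0`:
there is an `L_k`-matrix `L` with `V(t) = L(t)⁻¹(2L̇(t) + A(t)L(t))` and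
`W(t) = L(t)⁻¹(L̈(t) + A(t)L̇(t) + B(t)L(t))` for all `t ≥ t₀`. -/
def LkEquiv (t₀ : ℝ) (k : ℕ) {m : ℕ} (A B V W : ℝ → Matrix (Fin m) (Fin m) ℝ) : Prop :=
  ∃ L : ℝ → Matrix (Fin m) (Fin m) ℝ, IsLkMatrix t₀ k L ∧
    ∀ t ∈ Ici t₀,
      V t = (L t)⁻¹ * ((2:ℝ) • derivWithin L (Ici t₀) t + A t * L t) ∧
      W t = (L t)⁻¹ * (derivWithin (derivWithin L (Ici t₀)) (Ici t₀) t
              + A t * derivWithin L (Ici t₀) t + B t * L t)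

/-- `Λ(t) = 2∫_{t₀}^t S(ν) dν + S₀`. -/
noncomputable def Lam (t₀ : ℝ) {m : ℕ} (S : ℝ → Matrix (Fin m) (Fin m) ℝ)
    (S₀ : Matrix (Fin m) (Fin m) ℝ) (t : ℝ) : Matrix (Fin m) (Fin m) ℝ :=
  (2:ℝ) • (∫ ν in t₀..t, S ν) + S₀

/-!
Take `L` orthogonal with `L' = S L` for a skew-symmetric `S`. Then `|det L| = 1`, `‖L‖ = √m`,
`L⁻¹ = Lᵀ`, and `L'' + A L' + B L = (S' + S² + A S + B) L`, so `W = Lᵀ (S' + S² + A S + B) L`.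
The bracket is symmetric exactly when `S' = -½ (A S + S Aᵀ + B - Bᵀ)`, a linear ODE for `S`.
Both `S` and `L` solve linear ODEs with coefficients continuous on `[t₀, ∞)`, which have global
solutions by Picard iteration (the `n`-th increment is bounded by `D (C (t - t₀))ⁿ / n!`).
Skew-symmetry of `S` follows from Gronwall, since `S + Sᵀ` solves `P' = -½ (A P + P Aᵀ)`,
`P(t₀) = 0`; orthogonality of `L` from `(Lᵀ L)' = Lᵀ (Sᵀ + S) L = 0`.
-/

open Filter Topology MeasureTheory
open scoped Nat

attribute [local instance] Matrix.frobeniusNormedRing Matrix.frobeniusNormedAlgebra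

theorem integral_pow_sub_div_factorial (a b : ℝ) (n : ℕ) :
    ∫ s in a..b, (s - a) ^ n / n ! = (b - a) ^ (n + 1) / (n + 1)! := by
  rw [intervalIntegral.integral_div, intervalIntegral.integral_comp_sub_right fun s => s ^ n,
    integral_pow, Nat.factorial_succ]
  push_cast
  field_simp
  ring

section LinearODE

variable {F : Type*} [NormedAddCommGroup F] [NormedSpace ℝ F]

theorem TendstoUniformlyOn.clm_apply_of_norm_le {F' ι α : Type*} [NormedAddCommGroup F']
    [NormedSpace ℝ F'] {l : Filter ι} {s : Set α} {G : α → F →L[ℝ] F'} {f : ι → α → F}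
    {g : α → F} {C : ℝ} (h : TendstoUniformlyOn f g l s) (hG : ∀ x ∈ s, ‖G x‖ ≤ C) :
    TendstoUniformlyOn (fun i x => G x (f i x)) (fun x => G x (g x)) l s := by
  rw [Metric.tendstoUniformlyOn_iff] at h ⊢
  intro ε hε
  have hC : 0 < max C 1 := lt_max_of_lt_right one_pos
  filter_upwards [h (ε / max C 1) (div_pos hε hC)] with i hi x hx
  calc dist (G x (g x)) (G x (f i x)) = ‖G x (g x - f i x)‖ := by rw [dist_eq_norm, map_sub]
    _ ≤ max C 1 * dist (g x) (f i x) := by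
      rw [dist_eq_norm]
      exact (G x).le_of_opNorm_le ((hG x hx).trans (le_max_left _ _)) _
    _ < max C 1 * (ε / max C 1) := mul_lt_mul_of_pos_left (hi x hx) hC
    _ = ε := mul_div_cancel₀ ε hC.ne'

variable (G : ℝ → F →L[ℝ] F) (c : ℝ → F) (t₀ : ℝ) (y₀ : F)

noncomputable def picardIterate : ℕ → ℝ → F
  | 0 => fun _ => y₀
  | n + 1 => fun t => y₀ + ∫ s in t₀..t, (G s (picardIterate n s) + c s)

noncomputable def picardLimit (t : ℝ) : F :=
  y₀ + ∑' n, (picardIterate G c t₀ y₀ (n + 1) t - picardIterate G c t₀ y₀ n t)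

variable {G c t₀ y₀}

theorem eqOn_zero_of_hasDerivWithinAt_linear (hG : ContinuousOn G (Ici t₀)) {y : ℝ → F}
    (hy : ∀ t ∈ Ici t₀, HasDerivWithinAt y (G t (y t)) (Ici t₀) t) (h₀ : y t₀ = 0) :
    EqOn y 0 (Ici t₀) := by
  intro T hT
  obtain ⟨C, hC⟩ := isCompact_Icc.exists_bound_of_continuousOn
    (hG.mono (Icc_subset_Ici_self : Icc t₀ T ⊆ _))
  refine eq_zero_of_abs_deriv_le_mul_abs_self_of_eq_zero_right (K := C)
    (fun t ht => (hy t ht.1).continuousWithinAt.mono Icc_subset_Ici_self)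
    (fun t ht => (hy t ht.1).mono (Ici_subset_Ici.2 ht.1)) h₀
    (fun t ht => (G t).le_of_opNorm_le (hC t (Ico_subset_Icc_self ht)) _) T ⟨hT, le_rfl⟩

variable [CompleteSpace F]

theorem hasDerivWithinAt_integral_Ici {f : ℝ → F} {a t : ℝ} (hf : ContinuousOn f (Ici a))
    (ht : t ∈ Ici a) : HasDerivWithinAt (fun u => ∫ s in a..u, f s) (f t) (Ici a) t := by
  have hext : Continuous fun s => f (max s a) :=
    hf.comp_continuous (continuous_id.max continuous_const) fun s => le_max_right s a
  have heq : ∀ u ∈ Ici a, ∫ s in a..u, f (max s a) = ∫ s in a..u, f s := fun u hu =>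
    integral_congr fun s hs => by rw [max_eq_left (uIcc_of_le (mem_Ici.1 hu) ▸ hs).1]
  have hderiv := (hext.integral_hasStrictDerivAt a t).hasDerivAt.hasDerivWithinAt (s := Ici a)
  rw [max_eq_left (mem_Ici.1 ht)] at hderiv
  exact hderiv.congr (fun u hu => (heq u hu).symm) (heq t ht).symm

theorem continuousOn_picardIterate (hG : ContinuousOn G (Ici t₀)) (hc : ContinuousOn c (Ici t₀)) :
    ∀ n, ContinuousOn (picardIterate G c t₀ y₀ n) (Ici t₀)
  | 0 => continuousOn_const
  | n + 1 => fun _ ht => (hasDerivWithinAt_integral_Ici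
      ((hG.clm_apply (continuousOn_picardIterate hG hc n)).add hc) ht
      |>.const_add y₀).continuousWithinAt

theorem norm_picardIterate_succ_sub_le (hG : ContinuousOn G (Ici t₀))
    (hc : ContinuousOn c (Ici t₀)) {T C D : ℝ} (hC : ∀ s ∈ Icc t₀ T, ‖G s‖ ≤ C)
    (hD : ∀ s ∈ Icc t₀ T, ‖picardIterate G c t₀ y₀ 1 s - y₀‖ ≤ D) (n : ℕ) :
    ∀ t ∈ Icc t₀ T, ‖picardIterate G c t₀ y₀ (n + 1) t - picardIterate G c t₀ y₀ n t‖
      ≤ D * C ^ n * ((t - t₀) ^ n / n !) := by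
  induction n with
  | zero => intro t ht; simpa [picardIterate] using hD t ht
  | succ n ih =>
    intro t ht
    set u := picardIterate G c t₀ y₀
    have hint : ∀ k, IntervalIntegrable (fun s => G s (u k s) + c s) volume t₀ t := fun k =>
      ((hG.clm_apply (continuousOn_picardIterate hG hc k)).add hc |>.mono
        (uIcc_of_le ht.1 ▸ Icc_subset_Ici_self)).intervalIntegrable
    have hdiff : u (n + 2) t - u (n + 1) t = ∫ s in t₀..t, G s (u (n + 1) s - u n s) := by
      change (y₀ + _) - (y₀ + _) = _
      rw [add_sub_add_left_eq_sub, ← intervalIntegral.integral_sub (hint _) (hint _)]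
      simp only [map_sub, add_sub_add_right_eq_sub]
    rw [hdiff]
    calc ‖∫ s in t₀..t, G s (u (n + 1) s - u n s)‖
        ≤ ∫ s in t₀..t, D * C ^ (n + 1) * ((s - t₀) ^ n / n !) := by
          refine intervalIntegral.norm_integral_le_of_norm_le ht.1 (ae_of_all _ fun s hs => ?_)
            (Continuous.intervalIntegrable (by fun_prop) _ _)
          have hs' : s ∈ Icc t₀ T := ⟨hs.1.le, hs.2.trans ht.2⟩
          calc ‖G s (u (n + 1) s - u n s)‖ ≤ C * (D * C ^ n * ((s - t₀) ^ n / n !)) :=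
                (G s).le_of_opNorm_le_of_le (hC s hs') (ih s hs')
            _ = D * C ^ (n + 1) * ((s - t₀) ^ n / n !) := by ring
      _ = D * C ^ (n + 1) * ((t - t₀) ^ (n + 1) / (n + 1)!) := by
          rw [intervalIntegral.integral_const_mul, integral_pow_sub_div_factorial]

theorem tendstoUniformlyOn_picardIterate (hG : ContinuousOn G (Ici t₀))
    (hc : ContinuousOn c (Ici t₀)) (T : ℝ) :
    TendstoUniformlyOn (picardIterate G c t₀ y₀) (picardLimit G c t₀ y₀) atTop (Icc t₀ T) := by
  set u := picardIterate G c t₀ y₀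
  obtain ⟨C, hC⟩ := isCompact_Icc.exists_bound_of_continuousOn (hG.mono Icc_subset_Ici_self)
  obtain ⟨D, hD⟩ := isCompact_Icc.exists_bound_of_continuousOn
    ((continuousOn_picardIterate hG hc 1).sub continuousOn_const |>.mono Icc_subset_Ici_self)
  have hbound : ∀ n, ∀ t ∈ Icc t₀ T, ‖u (n + 1) t - u n t‖ ≤ D * C ^ n * ((T - t₀) ^ n / n !) :=
    fun n t ht => by
      have hC0 : 0 ≤ C := (norm_nonneg _).trans (hC t₀ (left_mem_Icc.2 (ht.1.trans ht.2)))
      have hD0 : 0 ≤ D := (norm_nonneg _).trans (hD t₀ (left_mem_Icc.2 (ht.1.trans ht.2)))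
      refine (norm_picardIterate_succ_sub_le hG hc hC hD n t ht).trans ?_
      gcongr
      exacts [sub_nonneg.2 ht.1, ht.2]
  have hsum : Summable fun n => D * C ^ n * ((T - t₀) ^ n / n !) := by
    simpa [mul_assoc, mul_pow, mul_div_assoc] using
      (Real.summable_pow_div_factorial (C * (T - t₀))).mul_left D
  have hpartial := (tendsto_const_nhds (x := y₀)).tendstoUniformlyOn_const (Icc t₀ T)
    |>.fun_add (tendstoUniformlyOn_tsum_nat hsum hbound)
  refine hpartial.congr (Eventually.of_forall fun N t _ => ?_)
  dsimp only
  rw [Finset.sum_range_sub (fun n => u n t)]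
  exact add_sub_cancel y₀ (u N t)

theorem continuousOn_picardLimit (hG : ContinuousOn G (Ici t₀)) (hc : ContinuousOn c (Ici t₀)) :
    ContinuousOn (picardLimit G c t₀ y₀) (Ici t₀) := by
  intro t ht
  have hIcc : ContinuousOn (picardLimit G c t₀ y₀) (Icc t₀ (t + 1)) :=
    (tendstoUniformlyOn_picardIterate hG hc _).continuousOn <| Frequently.of_forall fun n =>
      (continuousOn_picardIterate hG hc n).mono Icc_subset_Ici_self
  refine (hIcc t ⟨ht, by linarith⟩).mono_of_mem_nhdsWithin ?_
  rw [← Ici_inter_Iic]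
  exact inter_mem_nhdsWithin _ (Iic_mem_nhds (lt_add_one t))

theorem picardLimit_eq_add_integral (hG : ContinuousOn G (Ici t₀))
    (hc : ContinuousOn c (Ici t₀)) {t : ℝ} (ht : t₀ ≤ t) :
    picardLimit G c t₀ y₀ t
      = y₀ + ∫ s in t₀..t, (G s (picardLimit G c t₀ y₀ s) + c s) := by
  set u := picardIterate G c t₀ y₀
  have hu := tendstoUniformlyOn_picardIterate (y₀ := y₀) hG hc t
  obtain ⟨C, hC⟩ := isCompact_Icc.exists_bound_of_continuousOn (hG.mono Icc_subset_Ici_self)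
  have hIcc : uIcc t₀ t = Icc t₀ t := uIcc_of_le ht
  have hintegrand : TendstoUniformlyOn (fun n s => G s (u n s) + c s)
      (fun s => G s (picardLimit G c t₀ y₀ s) + c s) atTop (uIcc t₀ t) :=
    hIcc ▸ (hu.clm_apply_of_norm_le hC).fun_add
      fun _ hV => .of_forall fun _ _ _ => refl_mem_uniformity hV
  have hcont : ∀ n, ContinuousOn (fun s => G s (u n s) + c s) (uIcc t₀ t) := fun n =>
    hIcc ▸ ((hG.clm_apply (continuousOn_picardIterate hG hc n)).add hc).mono Icc_subset_Ici_self
  have hlim : Tendsto (fun n => u (n + 1) t) atTop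
      (𝓝 (y₀ + ∫ s in t₀..t, (G s (picardLimit G c t₀ y₀ s) + c s))) :=
    tendsto_const_nhds.add <|
      hintegrand.tendsto_intervalIntegral_of_continuousOn (.of_forall hcont)
  exact tendsto_nhds_unique
    ((hu.tendsto_at (right_mem_Icc.2 ht)).comp (tendsto_add_atTop_nat 1)) hlim

variable (y₀) in
theorem exists_hasDerivWithinAt_linear_ode (hG : ContinuousOn G (Ici t₀))
    (hc : ContinuousOn c (Ici t₀)) :
    ∃ y : ℝ → F, y t₀ = y₀ ∧
      ∀ t ∈ Ici t₀, HasDerivWithinAt y (G t (y t) + c t) (Ici t₀) t := by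
  have hint := fun t (ht : t ∈ Ici t₀) => picardLimit_eq_add_integral (y₀ := y₀) hG hc ht
  refine ⟨picardLimit G c t₀ y₀, by simpa using hint t₀ self_mem_Ici, fun t ht => ?_⟩
  have hcont := (hG.clm_apply (continuousOn_picardLimit (y₀ := y₀) hG hc)).add hc
  exact ((hasDerivWithinAt_integral_Ici hcont ht).const_add y₀).congr hint (hint t ht)

end LinearODE

theorem contDiffOn_two_of_hasDerivWithinAt {F : Type*} [NormedAddCommGroup F] [NormedSpace ℝ F]
    {f f₁ f₂ : ℝ → F} {s : Set ℝ} (hs : UniqueDiffOn ℝ s)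
    (hf : ∀ t ∈ s, HasDerivWithinAt f (f₁ t) s t) (hf₁ : ∀ t ∈ s, HasDerivWithinAt f₁ (f₂ t) s t)
    (hf₂ : ContinuousOn f₂ s) : ContDiffOn ℝ 2 f s := by
  have hf₁' : ContDiffOn ℝ 1 f₁ s := by
    rw [show (1 : WithTop ℕ∞) = 0 + 1 from rfl, contDiffOn_succ_iff_derivWithin hs]
    refine ⟨fun t ht => (hf₁ t ht).differentiableWithinAt, by simp, ?_⟩
    exact contDiffOn_zero.2 (hf₂.congr fun t ht => (hf₁ t ht).derivWithin (hs t ht))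
  rw [show (2 : WithTop ℕ∞) = 1 + 1 from rfl, contDiffOn_succ_iff_derivWithin hs]
  exact ⟨fun t ht => (hf t ht).differentiableWithinAt, by simp,
    hf₁'.congr fun t ht => (hf t ht).derivWithin (hs t ht)⟩

section MatrixODE

variable {n : Type*} [Fintype n] [DecidableEq n]

theorem abs_det_of_transpose_mul_self_eq_one {A : Matrix n n ℝ} (h : Aᵀ * A = 1) :
    |A.det| = 1 := by
  simpa using CStarRing.norm_of_mem_unitary
    (Matrix.det_of_mem_unitary ((Matrix.mem_orthogonalGroup_iff' n ℝ).2 h))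

theorem frobenius_norm_of_transpose_mul_self_eq_one {A : Matrix n n ℝ} (h : Aᵀ * A = 1) :
    ‖A‖ = √(Fintype.card n) := by
  have hcol : ∀ j, ∑ i, A i j ^ 2 = 1 := fun j => by
    simpa [Matrix.mul_apply, sq] using congrFun (congrFun h j) j
  rw [Matrix.frobenius_norm_def, Finset.sum_comm, ← Real.sqrt_eq_rpow]
  simp [Real.norm_eq_abs, hcol]

theorem Matrix.IsSymm.transpose_mul_mul {m k α : Type*} [Fintype m] [CommSemiring α]
    {M : Matrix m m α} (hM : M.IsSymm) (L : Matrix m k α) :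
    (Lᵀ * M * L).IsSymm := by
  simp [Matrix.IsSymm, Matrix.transpose_mul, hM.eq, Matrix.mul_assoc]

theorem HasDerivWithinAt.matrix_transpose {ι κ : Type*} [Fintype ι] [Fintype κ]
    {f : ℝ → Matrix ι κ ℝ} {f' : Matrix ι κ ℝ} {s : Set ℝ} {t : ℝ}
    (h : HasDerivWithinAt f f' s t) : HasDerivWithinAt (fun x => (f x)ᵀ) f'ᵀ s t :=
  ((Matrix.transposeLinearEquiv ι κ ℝ ℝ).toContinuousLinearEquiv.toContinuousLinearMap
    |>.hasFDerivAt).comp_hasDerivWithinAt t h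

noncomputable def lyapunovCLM (A : Matrix n n ℝ) : Matrix n n ℝ →L[ℝ] Matrix n n ℝ :=
  ContinuousLinearMap.mul ℝ _ A + (ContinuousLinearMap.mul ℝ _).flip Aᵀ

@[simp]
theorem lyapunovCLM_apply (A X : Matrix n n ℝ) : lyapunovCLM A X = A * X + X * Aᵀ := by
  unfold lyapunovCLM
  rfl

theorem ContinuousOn.lyapunovCLM {A : ℝ → Matrix n n ℝ} {s : Set ℝ} (hA : ContinuousOn A s) :
    ContinuousOn (fun t => _root_.lyapunovCLM (A t)) s := by
  have hmul := (ContinuousLinearMap.mul ℝ (Matrix n n ℝ)).continuous.comp_continuousOn hA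
  have hmul_flip := (ContinuousLinearMap.mul ℝ (Matrix n n ℝ)).flip.continuous.comp_continuousOn
    (continuous_id.matrix_transpose.comp_continuousOn hA)
  exact hmul.add hmul_flip

variable {t₀ : ℝ}

theorem exists_skew_symmetrizer {A B : ℝ → Matrix n n ℝ} (hA : ContinuousOn A (Ici t₀))
    (hB : ContinuousOn B (Ici t₀)) :
    ∃ S S' : ℝ → Matrix n n ℝ, ContinuousOn S' (Ici t₀) ∧
      (∀ t ∈ Ici t₀, HasDerivWithinAt S (S' t) (Ici t₀) t) ∧
      (∀ t ∈ Ici t₀, (S t)ᵀ = -S t) ∧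
      ∀ t ∈ Ici t₀, (S' t + S t * S t + A t * S t + B t).IsSymm := by
  set G := fun t => lyapunovCLM (-(2⁻¹ : ℝ) • A t)
  have hG : ContinuousOn G (Ici t₀) := (hA.fun_const_smul _).lyapunovCLM
  have hBt : ContinuousOn (fun t => (B t)ᵀ) (Ici t₀) :=
    continuous_id.matrix_transpose.comp_continuousOn hB
  obtain ⟨S, hS₀, hS⟩ := exists_hasDerivWithinAt_linear_ode
    (c := fun t => -(2⁻¹ : ℝ) • (B t - (B t)ᵀ)) 0 hG ((hB.sub hBt).fun_const_smul _)
  set S' := fun t => -(2⁻¹ : ℝ) • (A t * S t + S t * (A t)ᵀ + (B t - (B t)ᵀ))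
  have hS' : ∀ t ∈ Ici t₀, HasDerivWithinAt S (S' t) (Ici t₀) t := fun t ht =>
    (hS t ht).congr_deriv (by
      -- `erw`: in `hS` the coercion of `lyapunovCLM` goes through the Frobenius normed-space
      -- instances, which agree with the default ones on `Matrix n n ℝ` only up to unfolding.
      simp only [G, S']; erw [lyapunovCLM_apply]
      simp only [Matrix.transpose_smul, smul_mul_assoc, mul_smul_comm]; module)
  have hsym : ∀ t ∈ Ici t₀, S t + (S t)ᵀ = 0 := by
    refine eqOn_zero_of_hasDerivWithinAt_linear hG (fun t ht => ?_) (by simp [hS₀])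
    refine ((hS' t ht).add (hS' t ht).matrix_transpose).congr_deriv ?_
    simp only [G]
    erw [lyapunovCLM_apply]
    simp only [S', Matrix.transpose_add, Matrix.transpose_smul, Matrix.transpose_sub,
      Matrix.transpose_mul, Matrix.transpose_transpose, smul_mul_assoc, mul_smul_comm, mul_add,
      add_mul]
    module
  have hskew : ∀ t ∈ Ici t₀, (S t)ᵀ = -S t := fun t ht => eq_neg_of_add_eq_zero_right (hsym t ht)
  have hSc : ContinuousOn S (Ici t₀) := fun t ht => (hS t ht).continuousWithinAt
  refine ⟨S, S', ?_, hS', hskew, fun t ht => ?_⟩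
  · fun_prop
  simp only [Matrix.IsSymm, S', Matrix.transpose_add, Matrix.transpose_smul, Matrix.transpose_sub,
    Matrix.transpose_mul, Matrix.transpose_transpose, hskew t ht, mul_neg, neg_mul, neg_neg]
  module

theorem exists_orthogonal_hasDerivWithinAt {S : ℝ → Matrix n n ℝ} (hS : ContinuousOn S (Ici t₀))
    (hskew : ∀ t ∈ Ici t₀, (S t)ᵀ = -S t) :
    ∃ L : ℝ → Matrix n n ℝ, (∀ t ∈ Ici t₀, (L t)ᵀ * L t = 1) ∧
      ∀ t ∈ Ici t₀, HasDerivWithinAt L (S t * L t) (Ici t₀) t := by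
  obtain ⟨L, hL₀, hL⟩ := exists_hasDerivWithinAt_linear_ode (c := 0) 1
    ((ContinuousLinearMap.mul ℝ _).continuous.comp_continuousOn hS) continuousOn_const
  simp only [Function.comp_apply, ContinuousLinearMap.mul_apply', Pi.zero_apply, add_zero] at hL
  refine ⟨L, fun t ht => ?_, hL⟩
  have hconst := constant_of_has_deriv_right_zero (f := fun t => (L t)ᵀ * L t) (b := t)
    (fun s hs => ((hL s hs.1).matrix_transpose.mul (hL s hs.1)).continuousWithinAt.mono
      Icc_subset_Ici_self)
    fun s hs => (((hL s hs.1).matrix_transpose.mul (hL s hs.1)).congr_deriv (by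
      rw [Matrix.transpose_mul, hskew s hs.1]; noncomm_ring)).mono (Ici_subset_Ici.2 hs.1)
  simpa [hL₀] using hconst t ⟨ht, le_rfl⟩

theorem lkEquiv_of_orthogonal {m : ℕ} {A B L L₁ L₂ : ℝ → Matrix (Fin m) (Fin m) ℝ}
    (horth : ∀ t ∈ Ici t₀, (L t)ᵀ * L t = 1)
    (hL : ∀ t ∈ Ici t₀, HasDerivWithinAt L (L₁ t) (Ici t₀) t)
    (hL₁ : ∀ t ∈ Ici t₀, HasDerivWithinAt L₁ (L₂ t) (Ici t₀) t)
    (hL₂ : ContinuousOn L₂ (Ici t₀)) :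
    LkEquiv t₀ 0 A B (fun t => (L t)ᵀ * ((2 : ℝ) • L₁ t + A t * L t))
      (fun t => (L t)ᵀ * (L₂ t + A t * L₁ t + B t * L t)) := by
  have hd : ∀ t ∈ Ici t₀, derivWithin L (Ici t₀) t = L₁ t := fun t ht =>
    (hL t ht).derivWithin (uniqueDiffOn_Ici t₀ t ht)
  have hdd : ∀ t ∈ Ici t₀, derivWithin (derivWithin L (Ici t₀)) (Ici t₀) t = L₂ t := fun t ht =>
    ((hL₁ t ht).congr hd (hd t ht)).derivWithin (uniqueDiffOn_Ici t₀ t ht)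
  refine ⟨L, ⟨contDiffOn_two_of_hasDerivWithinAt (uniqueDiffOn_Ici t₀) hL hL₁ hL₂,
    ⟨1, one_pos, fun t ht => (abs_det_of_transpose_mul_self_eq_one (horth t ht)).ge⟩,
    fun i hi => ⟨√m, fun t ht => ?_⟩⟩, fun t ht => ?_⟩
  · simp [Nat.le_zero.1 hi, frobenius_norm_of_transpose_mul_self_eq_one (horth t ht)]
  · rw [Matrix.inv_eq_left_inv (horth t ht), hd t ht, hdd t ht]
    exact ⟨rfl, rfl⟩

end MatrixODE

/-- If `A, B` are continuous on `[t₀,∞)`, then the system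
`ẍ + A(t)ẋ + B(t)x = 0` is `L₀`-equivalent to some system `ξ̈ + V(t)ξ̇ + W(t)ξ = 0`
with `V, W` continuous and `W(t)` symmetric for all `t ≥ t₀`. -/
theorem stmt_6 {m : ℕ} (t₀ : ℝ) (A B : ℝ → Matrix (Fin m) (Fin m) ℝ)
    (hA : ContinuousOn A (Ici t₀)) (hB : ContinuousOn B (Ici t₀)) :
    ∃ V W : ℝ → Matrix (Fin m) (Fin m) ℝ,
      ContinuousOn V (Ici t₀) ∧ ContinuousOn W (Ici t₀) ∧
      (∀ t ∈ Ici t₀, (W t)ᵀ = W t) ∧ LkEquiv t₀ 0 A B V W := by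
  obtain ⟨S, S', hS'c, hS, hskew, hsymm⟩ := exists_skew_symmetrizer hA hB
  have hSc : ContinuousOn S (Ici t₀) := fun t ht => (hS t ht).continuousWithinAt
  obtain ⟨L, horth, hL⟩ := exists_orthogonal_hasDerivWithinAt hSc hskew
  have hLc : ContinuousOn L (Ici t₀) := fun t ht => (hL t ht).continuousWithinAt
  have hL₁ : ∀ t ∈ Ici t₀, HasDerivWithinAt (fun t => S t * L t)
      (S' t * L t + S t * (S t * L t)) (Ici t₀) t := fun t ht => (hS t ht).mul (hL t ht)
  refine ⟨_, _, ?_, ?_, fun t ht => ?_, lkEquiv_of_orthogonal horth hL hL₁ (by fun_prop)⟩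
  · fun_prop
  · fun_prop
  · have hW : S' t * L t + S t * (S t * L t) + A t * (S t * L t) + B t * L t
        = (S' t + S t * S t + A t * S t + B t) * L t := by noncomm_ring
    simpa only [hW, Matrix.mul_assoc] using ((hsymm t ht).transpose_mul_mul (L t)).eq
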